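/- Let T ⊂ ℓ², r > 1, M ≥ 1, and let (𝒜_n)_{n≥0} be a nested admissible sequence of partitions of T. For each n ≥ 0 and A ∈ 𝒜_n let j_n(A) ∈ ℤ and π_n(A) ∈ T be given; write j_n(t) = j_n(A_n(t)) and π_n(t) = π_n(A_n(t)), where A_n(t) is the element of 𝒜_n containing t, and set I_n(t) = {i ≥ 1 : |π_{k+1}(t)_i − π_k(t)_i| ≤ r^{−j_k(t)} for all 0 ≤ k ≤ n−1} (so I_0(t) = ℕ). Assume: (i) ‖t − s‖₂ ≤ √M · r^{−j_0(T)} for all s, t ∈ T, where j_0(T) is the value of j_0 on the single element of 𝒜_0; (ii) for every n ≥ 1 and A ∈ 𝒜_n with A ⊂ A' ∈ 𝒜_{n−1}, either j_n(A) = j_{n−1}(A') and π_n(A) = π_{n−1}(A'), or j_n(A) > j_{n−1}(A'), π_n(A) ∈ A', and Σ_{i ∈ I_n(t)} min(|t_i − π_n(A)_i|², r^{−2 j_n(A)}) ≤ M 2^n r^{−2 j_n(A)} for every t ∈ A. Then for every t ∈ T and every n ≥ 0 one has |ℕ ∖ I_n(t)| ≤ M 2^n, and there exists a set J_n(t) ⊆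 I_n(t) with |ℕ ∖ J_n(t)| ≤ M 2^{n+1} such that Σ_{i ∈ J_n(t)} |t_i − π_n(t)_i|² ≤ M 2^n r^{−2 j_n(t)}. -/

import Mathlib

open MeasureTheory ProbabilityTheory ENNReal Filter Pointwise

noncomputable section

/-- The space `ℓ²` of square-summable real sequences. -/
abbrev ℓ2 : Type := lp (fun _ : ℕ => ℝ) 2

/-- `P` is a partition of the set `T`. -/
def IsPartitionOf {α : Type*} (T : Set α) (P : Set (Set α)) : Prop :=
  (∀ S ∈ P, S ⊆ T) ∧ ∀ x ∈ T, ∃! S, S ∈ P ∧ x ∈ S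

/-- An admissible sequence of partitions of `T`: `𝒜 0 = {T}` and `|𝒜 n| ≤ 2 ^ 2 ^ n`. -/
def IsAdmissibleSeq {α : Type*} (T : Set α) (A : ℕ → Set (Set α)) : Prop :=
  A 0 = {T} ∧ (∀ n, IsPartitionOf T (A n)) ∧
    ∀ n, 1 ≤ n → (A n).Finite ∧ (A n).ncard ≤ 2 ^ 2 ^ n

/-- A chaining compatible with the sequence of partitions `A`: each `π n` is constant on
every element of `A n` and maps points of a partition element into that element. -/
def IsCompatibleChaining {α : Type*} (T : Set α) (A : ℕ → Set (Set α)) (π : ℕ → α → α) : Prop :=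
  ∀ n, ∀ S ∈ A n, ∀ x ∈ S, π n x ∈ S ∧ ∀ y ∈ S, π n x = π n y

/-- The chaining functional `γ_X(T)`. -/
def gammaFunctional {α Ω : Type*} [MeasurableSpace Ω] (μ : Measure Ω)
    (X : α → Ω → ℝ) (T : Set α) : ℝ≥0∞ :=
  ⨅ (P : {q : (ℕ → Set (Set α)) × (ℕ → α → α) //
      IsAdmissibleSeq T q.1 ∧ IsCompatibleChaining T q.1 q.2}),
    ⨆ t ∈ T, ∑' n : ℕ,
      eLpNorm (fun ω => X (P.1.2 (n + 1) t) ω - X (P.1.2 n t) ω) (2 ^ (n + 1)) μ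

/-- `S_X(T) = sup { E sup_{t ∈ F} X t : F finite nonempty subset of T }`. -/
def SFunctional {α Ω : Type*} [MeasurableSpace Ω] (μ : Measure Ω)
    (X : α → Ω → ℝ) (T : Set α) : ℝ≥0∞ :=
  ⨆ (F : Finset α) (hF : F.Nonempty) (_ : ↑F ⊆ T),
    ENNReal.ofReal (∫ ω, F.sup' hF (fun t => X t ω) ∂μ)

/-- A sequence of independent Rademacher random variables. -/
def IsRademacherFamily {Ω : Type*} [MeasurableSpace Ω] (μ : Measure Ω)
    (ε : ℕ → Ω → ℝ) : Prop :=
  (∀ i, Measurable (ε i)) ∧ iIndepFun ε μ ∧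
    ∀ i, μ.map (ε i) =
      (2 : ℝ≥0∞)⁻¹ • Measure.dirac (1 : ℝ) + (2 : ℝ≥0∞)⁻¹ • Measure.dirac (-1 : ℝ)

/-- A sequence of independent standard Gaussian random variables. -/
def IsGaussianFamily {Ω : Type*} [MeasurableSpace Ω] (μ : Measure Ω)
    (g : ℕ → Ω → ℝ) : Prop :=
  (∀ i, Measurable (g i)) ∧ iIndepFun g μ ∧
    ∀ i, μ.map (g i) = gaussianReal 0 1

/-- A sequence of i.i.d. random variables with mean `0` and variance `1`. -/
def IsIIDStandard {Ω : Type*} [MeasurableSpace Ω] (μ : Measure Ω) (ξ : ℕ → Ω → ℝ) : Prop :=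
  (∀ i, Measurable (ξ i)) ∧ iIndepFun ξ μ ∧
    (∀ i, IdentDistrib (ξ i) (ξ 0) μ μ) ∧
    (∀ i, ∫ ω, ξ i ω ∂μ = 0) ∧ (∀ i, ∫ ω, (ξ i ω) ^ 2 ∂μ = 1)

/-- `X` is the canonical process associated with `(ξ i)`: for every `t ∈ ℓ²` the series
`∑ i, t i * ξ i` converges to `X t` in `L²`. -/
def IsCanonicalProcess {Ω : Type*} [MeasurableSpace Ω] (μ : Measure Ω)
    (ξ : ℕ → Ω → ℝ) (X : ℓ2 → Ω → ℝ) : Prop :=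
  ∀ t : ℓ2, Tendsto
    (fun N => eLpNorm (fun ω => (∑ i ∈ Finset.range N, t i * ξ i ω) - X t ω) 2 μ)
    atTop (nhds 0)


/-- The set `I_n(t)` of coordinates where all increments of the chain up to level `n`
are small: `I_n(t) = {i : |π_{k+1}(t)_i − π_k(t)_i| ≤ r^{−j_k(t)} for all 0 ≤ k ≤ n−1}`. -/
def chainSet (r : ℝ) (j : ℕ → ℓ2 → ℤ) (π : ℕ → ℓ2 → ℓ2) (n : ℕ) (t : ℓ2) : Set ℕ :=
  {i | ∀ k < n, |(π (k + 1) t) i - (π k t) i| ≤ r ^ (-(j k t))}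


/-! The inequality of (ii) at level `n` persists along the chain: at level `0` it follows from
the diameter bound (i), and a stationary step inherits it from the previous level because
`I_{n+1}(s) ⊆ I_n(s)`. A coordinate leaving `I_n(t)` at step `n + 1` has
`|π_{n+1}(t)_i − π_n(t)_i|² > r^{−2 j_n(t)}`, which only happens at a non-stationary step; there
`s = π_{n+1}(t)` lies in the cell `A_n(t)`, so the truncated sum at level `n` allows at most
`M 2^n` such coordinates. Finally `J_n(t)` keeps the coordinates of `I_n(t)` on which the
truncation at level `n`, applied to `s = t`, is inactive. -/

open Set

section Summation

variable {α : Type*} {f : α → ℝ}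

theorem tsum_subtype_mono (hf : Summable f) (hf0 : 0 ≤ f) {s t : Set α} (hst : s ⊆ t) :
    ∑' i : s, f i ≤ ∑' i : t, f i :=
  Summable.tsum_le_tsum_of_inj (inclusion hst) (inclusion_injective hst) (fun _ _ => hf0 _)
    (fun _ => le_rfl) (hf.subtype _) (hf.subtype _)

theorem Summable.min_const (hf : Summable f) (hf0 : 0 ≤ f) {c : ℝ} (hc : 0 ≤ c) :
    Summable fun i => min (f i) c :=
  hf.of_nonneg_of_le (fun i => le_min (hf0 i) hc) fun _ => min_le_left _ _

theorem finite_ncard_le_of_tsum_min_le (hf : Summable f) (hf0 : 0 ≤ f) {c B : ℝ} (hc : 0 < c)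
    {I : Set α} (hB : ∑' i : I, min (f i) c ≤ B * c) :
    {i ∈ I | c < f i}.Finite ∧ ({i ∈ I | c < f i}.ncard : ℝ) ≤ B := by
  set E := {i ∈ I | c < f i}
  have hE : E.Finite := (hf.tendsto_cofinite_zero.eventually (gt_mem_nhds hc)).subset
    fun i hi => not_lt.2 hi.2.le
  refine ⟨hE, le_of_mul_le_mul_right ?_ hc⟩
  calc (E.ncard : ℝ) * c = ∑ i ∈ hE.toFinset, min (f i) c := by
        rw [ncard_eq_toFinset_card _ hE, Finset.sum_congr rfl fun i hi =>
          min_eq_right ((hE.mem_toFinset.1 hi).2.le), Finset.sum_const, nsmul_eq_mul]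
    _ = ∑' i : (hE.toFinset : Set α), min (f i) c := (Finset.tsum_subtype' _ _).symm
    _ ≤ ∑' i : I, min (f i) c := tsum_subtype_mono (hf.min_const hf0 hc.le)
        (fun i => le_min (hf0 i) hc.le) (hE.coe_toFinset.subset.trans (sep_subset _ _))
    _ ≤ B * c := hB

theorem tsum_sep_le_of_tsum_min_le (hf : Summable f) (hf0 : 0 ≤ f) {c B : ℝ} (hc : 0 ≤ c)
    {I : Set α} (hB : ∑' i : I, min (f i) c ≤ B) :
    ∑' i : {i ∈ I | f i ≤ c}, f i ≤ B :=
  calc ∑' i : {i ∈ I | f i ≤ c}, f i = ∑' i : {i ∈ I | f i ≤ c}, min (f i) c :=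
        tsum_congr fun i => (min_eq_left i.2.2).symm
    _ ≤ ∑' i : I, min (f i) c :=
        tsum_subtype_mono (hf.min_const hf0 hc) (fun i => le_min (hf0 i) hc) (sep_subset _ _)
    _ ≤ B := hB

theorem finite_ncard_le_add_of_subset_union {S T D : Set α} (h : S ⊆ T ∪ D) {a b : ℝ}
    (hT : T.Finite ∧ (T.ncard : ℝ) ≤ a) (hD : D.Finite ∧ (D.ncard : ℝ) ≤ b) :
    S.Finite ∧ (S.ncard : ℝ) ≤ a + b := by
  have hTD := hT.1.union hD.1
  refine ⟨hTD.subset h, ?_⟩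
  have := (ncard_le_ncard h hTD).trans (ncard_union_le T D)
  calc (S.ncard : ℝ) ≤ T.ncard + D.ncard := by exact_mod_cast this
    _ ≤ a + b := add_le_add hT.2 hD.2

end Summation

theorem lp.hasSum_sq_abs_sub {ι : Type*} (u v : lp (fun _ : ι => ℝ) 2) :
    HasSum (fun i => |u i - v i| ^ 2) (‖u - v‖ ^ 2) := by
  have h := lp.hasSum_norm (p := 2) (by norm_num) (u - v)
  simp only [ENNReal.toReal_ofNat, Real.rpow_two, lp.coeFn_sub, Pi.sub_apply,
    Real.norm_eq_abs] at h
  exact h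

theorem zpow_neg_two_mul (r : ℝ) (a : ℤ) : r ^ (-(2 * a)) = (r ^ (-a)) ^ 2 := by
  rw [← zpow_natCast, ← zpow_mul]
  ring_nf

def IsNested {α : Type*} (A : ℕ → Set (Set α)) : Prop :=
  ∀ n : ℕ, 1 ≤ n → ∀ S ∈ A n, ∃ S' ∈ A (n - 1), S ⊆ S'

def IsCellwiseConst {α β : Type*} (A : ℕ → Set (Set α)) (f : ℕ → α → β) : Prop :=
  ∀ n, ∀ S ∈ A n, ∀ x ∈ S, ∀ y ∈ S, f n x = f n y

def SameCell {α : Type*} (A : ℕ → Set (Set α)) (n : ℕ) (s t : α) : Prop :=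
  ∃ S ∈ A n, s ∈ S ∧ t ∈ S

section Cells

variable {α : Type*} {A : ℕ → Set (Set α)} {n : ℕ} {s t : α}

theorem sameCell_self {T : Set α} (hA : IsPartitionOf T (A n)) (ht : t ∈ T) : SameCell A n t t :=
  let ⟨S, hS, htS⟩ := (hA.2 t ht).exists
  ⟨S, hS, htS, htS⟩

theorem SameCell.mono (hA : IsNested A) {m : ℕ} (hmn : m ≤ n) (h : SameCell A n s t) :
    SameCell A m s t := by
  induction n, hmn using Nat.le_induction with
  | base => exact h
  | succ n _ ih =>
    obtain ⟨S, hS, hs, ht⟩ := h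
    obtain ⟨S', hS', hSS'⟩ := hA (n + 1) (Nat.le_add_left 1 n) S hS
    exact ih ⟨S', hS', hSS' hs, hSS' ht⟩

theorem SameCell.eq_of_le {β : Type*} {f : ℕ → α → β} (hA : IsNested A)
    (hf : IsCellwiseConst A f) (h : SameCell A n s t) {k : ℕ} (hk : k ≤ n) : f k s = f k t :=
  let ⟨S, hS, hs, ht⟩ := h.mono hA hk
  hf k S hS s hs t ht

end Cells

section Chaining

variable {T : Set ℓ2} {A : ℕ → Set (Set ℓ2)} {r M : ℝ} {j : ℕ → ℓ2 → ℤ} {π : ℕ → ℓ2 → ℓ2}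
  {n : ℕ} {s t : ℓ2}

theorem chainSet_zero : chainSet r j π 0 t = univ := by
  ext; simp [chainSet]

theorem chainSet_succ :
    chainSet r j π (n + 1) t =
      chainSet r j π n t ∩ {i | |π (n + 1) t i - π n t i| ≤ r ^ (-(j n t))} := by
  ext i
  simp only [chainSet, mem_inter_iff, mem_ofPred_eq]
  exact ⟨fun h => ⟨fun k hk => h k (hk.trans n.lt_succ_self), h n n.lt_succ_self⟩,
    fun ⟨h, hn⟩ k hk => (Nat.lt_succ_iff_lt_or_eq.1 hk).elim (h k) fun e => e ▸ hn⟩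

theorem chainSet_antitone : Antitone fun n => chainSet r j π n t :=
  fun _ _ hmn _ hi k hk => hi k (hk.trans_le hmn)

theorem SameCell.chainSet_eq (hA : IsNested A) (hj : IsCellwiseConst A j)
    (hπ : IsCellwiseConst A π) (h : SameCell A n s t) :
    chainSet r j π n s = chainSet r j π n t := by
  ext i
  simp only [chainSet, mem_ofPred_eq]
  refine forall₂_congr fun k hk => ?_
  rw [h.eq_of_le hA hj hk.le, h.eq_of_le hA hπ hk.le, h.eq_of_le hA hπ hk]

def jumpSet (r : ℝ) (j : ℕ → ℓ2 → ℤ) (π : ℕ → ℓ2 → ℓ2) (n : ℕ) (t : ℓ2) : Set ℕ :=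
  {i ∈ chainSet r j π n t | r ^ (-(2 * j n t)) < |π (n + 1) t i - π n t i| ^ 2}

theorem compl_chainSet_succ_subset (hr : 0 ≤ r) :
    (chainSet r j π (n + 1) t)ᶜ ⊆ (chainSet r j π n t)ᶜ ∪ jumpSet r j π n t := by
  intro i hi
  rw [chainSet_succ, mem_compl_iff, mem_inter_iff, not_and] at hi
  by_cases hin : i ∈ chainSet r j π n t
  · refine Or.inr ⟨hin, ?_⟩
    rw [zpow_neg_two_mul]
    exact pow_lt_pow_left₀ (not_le.1 (hi hin)) (zpow_nonneg hr _) two_ne_zero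
  · exact Or.inl hin

/-- The inequality of hypothesis (ii) at level `n`, over the whole cell `A_n(t)`. -/
def TruncatedBound (r M : ℝ) (A : ℕ → Set (Set ℓ2)) (j : ℕ → ℓ2 → ℤ) (π : ℕ → ℓ2 → ℓ2)
    (n : ℕ) (t : ℓ2) : Prop :=
  ∀ s, SameCell A n t s →
    ∑' i : chainSet r j π n s, min (|s i - π n t i| ^ 2) (r ^ (-(2 * j n t))) ≤
      M * 2 ^ n * r ^ (-(2 * j n t))

theorem truncatedBound_zero (hA0 : A 0 = {T}) (hj : IsCellwiseConst A j) (hπT : π 0 t ∈ T)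
    (hi : ∀ s ∈ T, ∀ t ∈ T, ‖t - s‖ ≤ Real.sqrt M * r ^ (-(j 0 t))) (hM : 0 ≤ M) :
    TruncatedBound r M A j π 0 t := by
  rintro s ⟨S, hS, htS, hsS⟩
  obtain rfl : S = T := by rwa [hA0, mem_singleton_iff] at hS
  set c := r ^ (-(2 * j 0 t)) with hc_def
  have hc : 0 ≤ c := by rw [hc_def, zpow_neg_two_mul]; positivity
  have hsum := lp.hasSum_sq_abs_sub s (π 0 t)
  have hdist : ‖s - π 0 t‖ ≤ Real.sqrt M * r ^ (-(j 0 t)) := by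
    rw [← hj 0 S hS s hsS t htS]
    exact hi _ hπT s hsS
  calc ∑' i : chainSet r j π 0 s, min (|s i - π 0 t i| ^ 2) c
      ≤ ∑' i, min (|s i - π 0 t i| ^ 2) c :=
        Summable.tsum_subtype_le _ _ (fun _ => le_min (sq_nonneg _) hc)
          (hsum.summable.min_const (fun _ => sq_nonneg _) hc)
    _ ≤ ∑' i, |s i - π 0 t i| ^ 2 :=
        Summable.tsum_le_tsum (fun _ => min_le_left _ _)
          (hsum.summable.min_const (fun _ => sq_nonneg _) hc) hsum.summable
    _ = ‖s - π 0 t‖ ^ 2 := hsum.tsum_eq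
    _ ≤ (Real.sqrt M * r ^ (-(j 0 t))) ^ 2 := pow_le_pow_left₀ (norm_nonneg _) hdist 2
    _ = M * 2 ^ 0 * c := by rw [mul_pow, Real.sq_sqrt hM, hc_def, zpow_neg_two_mul]; ring

theorem TruncatedBound.succ_of_eq (hA : IsNested A) (hM : 0 ≤ M) (hj : j (n + 1) t = j n t)
    (hπ : π (n + 1) t = π n t) (h : TruncatedBound r M A j π n t) :
    TruncatedBound r M A j π (n + 1) t := by
  intro s hs
  rw [hj, hπ]
  set c := r ^ (-(2 * j n t)) with hc_def
  have hc : 0 ≤ c := by rw [hc_def, zpow_neg_two_mul]; positivity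
  calc ∑' i : chainSet r j π (n + 1) s, min (|s i - π n t i| ^ 2) c
      ≤ ∑' i : chainSet r j π n s, min (|s i - π n t i| ^ 2) c :=
        tsum_subtype_mono
          ((lp.hasSum_sq_abs_sub s (π n t)).summable.min_const (fun _ => sq_nonneg _) hc)
          (fun _ => le_min (sq_nonneg _) hc) (chainSet_antitone n.le_succ)
    _ ≤ M * 2 ^ n * c := h s (hs.mono hA n.le_succ)
    _ ≤ M * 2 ^ (n + 1) * c := by gcongr <;> norm_num

theorem truncatedBound_all (hA : IsNested A) (hA0 : A 0 = {T}) (hj : IsCellwiseConst A j)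
    (hπT : π 0 t ∈ T) (hi : ∀ s ∈ T, ∀ t ∈ T, ‖t - s‖ ≤ Real.sqrt M * r ^ (-(j 0 t)))
    (hM : 0 ≤ M)
    (hstep : ∀ n, (j (n + 1) t = j n t ∧ π (n + 1) t = π n t) ∨
      TruncatedBound r M A j π (n + 1) t) :
    ∀ n, TruncatedBound r M A j π n t
  | 0 => truncatedBound_zero hA0 hj hπT hi hM
  | n + 1 => (hstep n).elim (fun h => (truncatedBound_all hA hA0 hj hπT hi hM hstep n).succ_of_eq
      hA hM h.1 h.2) id

theorem finite_ncard_jumps_le (hA : IsNested A) (hj : IsCellwiseConst A j)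
    (hπ : IsCellwiseConst A π) (hpart : IsPartitionOf T (A n)) (ht : t ∈ T) (hr : 0 < r)
    (hM : 0 ≤ M) (hstep : π (n + 1) t = π n t ∨ ∀ S ∈ A n, t ∈ S → π (n + 1) t ∈ S)
    (hbound : TruncatedBound r M A j π n t) :
    (jumpSet r j π n t).Finite ∧ ((jumpSet r j π n t).ncard : ℝ) ≤ M * 2 ^ n := by
  have hc : 0 < r ^ (-(2 * j n t)) := zpow_pos hr _
  rcases hstep with hπ' | hmem
  · have hempty : jumpSet r j π n t = ∅ := by
      refine eq_empty_iff_forall_notMem.2 fun i hi => hi.2.not_ge ?_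
      rw [hπ', sub_self, abs_zero, zero_pow two_ne_zero]
      exact hc.le
    rw [hempty]
    simpa using mul_nonneg hM (pow_nonneg zero_le_two n)
  · obtain ⟨S, hS, htS, -⟩ := sameCell_self hpart ht
    have hts : SameCell A n t (π (n + 1) t) := ⟨S, hS, htS, hmem S hS htS⟩
    have hsum := lp.hasSum_sq_abs_sub (π (n + 1) t) (π n t)
    have := finite_ncard_le_of_tsum_min_le hsum.summable (fun _ => sq_nonneg _) hc
      (hbound _ hts)
    rw [← hts.chainSet_eq hA hj hπ] at this
    exact this

theorem finite_ncard_compl_chainSet_le (hr : 0 ≤ r) (hM : 0 ≤ M)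
    (hjumps : ∀ n, (jumpSet r j π n t).Finite ∧ ((jumpSet r j π n t).ncard : ℝ) ≤ M * 2 ^ n) :
    ∀ n, (chainSet r j π n t)ᶜ.Finite ∧ ((chainSet r j π n t)ᶜ.ncard : ℝ) ≤ M * 2 ^ n
  | 0 => by simpa [chainSet_zero] using hM
  | n + 1 => by
    have := finite_ncard_le_add_of_subset_union (compl_chainSet_succ_subset hr)
      (finite_ncard_compl_chainSet_le hr hM hjumps n) (hjumps n)
    exact this.imp_right (·.trans_eq (by ring))

theorem exists_subset_chainSet (hpart : IsPartitionOf T (A n)) (ht : t ∈ T) (hr : 0 < r)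
    (hbound : TruncatedBound r M A j π n t)
    (hcompl : (chainSet r j π n t)ᶜ.Finite ∧ ((chainSet r j π n t)ᶜ.ncard : ℝ) ≤ M * 2 ^ n) :
    ∃ J ⊆ chainSet r j π n t, Jᶜ.Finite ∧ ((Jᶜ.ncard : ℝ) ≤ M * 2 ^ (n + 1)) ∧
      ∑' i : J, |t i - π n t i| ^ 2 ≤ M * 2 ^ n * r ^ (-(2 * j n t)) := by
  have hc : 0 < r ^ (-(2 * j n t)) := zpow_pos hr _
  have hsum := lp.hasSum_sq_abs_sub t (π n t)
  have hb := hbound t (sameCell_self hpart ht)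
  have hsub : {i ∈ chainSet r j π n t | |t i - π n t i| ^ 2 ≤ r ^ (-(2 * j n t))}ᶜ ⊆
      (chainSet r j π n t)ᶜ ∪
        {i ∈ chainSet r j π n t | r ^ (-(2 * j n t)) < |t i - π n t i| ^ 2} := by
    intro i hi
    by_cases hin : i ∈ chainSet r j π n t
    · exact Or.inr ⟨hin, not_le.1 fun h => hi ⟨hin, h⟩⟩
    · exact Or.inl hin
  obtain ⟨hfin, hcard⟩ := finite_ncard_le_add_of_subset_union hsub hcompl
    (finite_ncard_le_of_tsum_min_le hsum.summable (fun _ => sq_nonneg _) hc hb)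
  exact ⟨_, sep_subset _ _, hfin, hcard.trans_eq (by ring),
    tsum_sep_le_of_tsum_min_le hsum.summable (fun _ => sq_nonneg _) hc.le hb⟩

end Chaining

/-- structural properties of the partition scheme of the Bernoulli theorem:
the complement of `I_n(t)` has at most `M 2^n` elements, and after removing at most
`M 2^{n+1}` coordinates the truncation in the increment bound can be removed. -/
theorem chainSet_complement_card_le (T : Set ℓ2) (r M : ℝ) (hr : 1 < r) (hM : 1 ≤ M)
    (A : ℕ → Set (Set ℓ2)) (hA : IsAdmissibleSeq T A)
    (hnested : ∀ n : ℕ, 1 ≤ n → ∀ S ∈ A n, ∃ S' ∈ A (n - 1), S ⊆ S')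
    (j : ℕ → ℓ2 → ℤ) (π : ℕ → ℓ2 → ℓ2)
    (hconst : ∀ n, ∀ S ∈ A n, ∀ x ∈ S, ∀ y ∈ S, j n x = j n y ∧ π n x = π n y)
    (hπT : ∀ t ∈ T, ∀ n, π n t ∈ T)
    (hi : ∀ s ∈ T, ∀ t ∈ T, ‖t - s‖ ≤ Real.sqrt M * r ^ (-(j 0 t)))
    (hii : ∀ n : ℕ, 1 ≤ n → ∀ t ∈ T,
      (j n t = j (n - 1) t ∧ π n t = π (n - 1) t) ∨
      (j (n - 1) t < j n t ∧ (∀ S' ∈ A (n - 1), t ∈ S' → π n t ∈ S') ∧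
        ∀ s : ℓ2, (∃ S ∈ A n, t ∈ S ∧ s ∈ S) →
          ∑' i : chainSet r j π n s,
              min (|(s : ∀ _ : ℕ, ℝ) i - (π n t) i| ^ 2) (r ^ (-(2 * j n t))) ≤
            M * 2 ^ n * r ^ (-(2 * j n t)))) :
    ∀ t ∈ T, ∀ n : ℕ,
      ((chainSet r j π n t)ᶜ.Finite ∧
        (((chainSet r j π n t)ᶜ.ncard : ℝ) ≤ M * 2 ^ n)) ∧
      ∃ J ⊆ chainSet r j π n t, Jᶜ.Finite ∧ ((Jᶜ.ncard : ℝ) ≤ M * 2 ^ (n + 1)) ∧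
        ∑' i : J, |(t : ∀ _ : ℕ, ℝ) i - (π n t) i| ^ 2 ≤ M * 2 ^ n * r ^ (-(2 * j n t)) := by
  intro t ht n
  obtain ⟨hA0, hpart, -⟩ := hA
  have hr0 : 0 < r := by linarith
  have hM0 : 0 ≤ M := by linarith
  have hj : IsCellwiseConst A j := fun n S hS x hx y hy => (hconst n S hS x hx y hy).1
  have hπ : IsCellwiseConst A π := fun n S hS x hx y hy => (hconst n S hS x hx y hy).2
  have hstep n := hii (n + 1) (Nat.le_add_left 1 n) t ht
  have hbound := truncatedBound_all hnested hA0 hj (hπT t ht 0) hi hM0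
    fun n => (hstep n).imp id (·.2.2)
  have hcompl := finite_ncard_compl_chainSet_le hr0.le hM0 fun n =>
    finite_ncard_jumps_le hnested hj hπ (hpart n) ht hr0 hM0 ((hstep n).imp (·.2) (·.2.1))
      (hbound n)
  exact ⟨hcompl n, exists_subset_chainSet (hpart n) ht hr0 (hbound n) (hcompl n)⟩
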